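/- Let q > 3 be prime, G = D_{2q} ≤ S_q, and ψ = ψ_h any degree-2 irreducible character (0 < h < q/2). Then ‖f^ψ_{i1}‖² = 2/q < 1/2, yet V^ψ(G) has no O-basis; hence the norm condition √2/2 < ‖f^λ_{ij}‖ < 1 is sufficient but not necessary for non-existence of an O-basis. -/

import Mathlib

open scoped Classical InnerProductSpace ComplexConjugate

noncomputable section

/-- The Cartesian product `×^m V` with the inner product `⟨z,w⟩ = Σ ⟨z_i, w_i⟩`. -/
abbrev CartPow (V : Type*) [NormedAddCommGroup V] [InnerProductSpace ℂ V] (m : ℕ) :=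
  PiLp 2 (fun _ : Fin m => V)

/-- The Cartesian permutation operator `Q(τ)(u₁,…,u_m) = (u_{τ⁻¹(1)},…,u_{τ⁻¹(m)})`. -/
def CartQ (V : Type*) [NormedAddCommGroup V] [InnerProductSpace ℂ V] (m : ℕ)
    (τ : Equiv.Perm (Fin m)) : CartPow V m →ₗ[ℂ] CartPow V m where
  toFun u := WithLp.toLp 2 (fun i => u (τ⁻¹ i))
  map_add' _ _ := rfl
  map_smul' _ _ := rfl

/-- The Cartesian symmetrizer `C_χ = (χ(1)/|G|) Σ_{τ∈G} χ(τ) Q(τ)`. -/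
def cartSym (V : Type*) [NormedAddCommGroup V] [InnerProductSpace ℂ V] (m : ℕ)
    (G : Subgroup (Equiv.Perm (Fin m))) (χ : ↥G → ℂ) :
    CartPow V m →ₗ[ℂ] CartPow V m :=
  (χ 1 / (Nat.card G : ℂ)) • ∑ τ : G, χ τ • CartQ V m (τ : Equiv.Perm (Fin m))

/-- `χ : H → ℂ` is the character of some irreducible (finite-dimensional, complex)
representation of `H`. -/
def IsIrredChar {H : Type} [Group H] (χ : H → ℂ) : Prop :=
  ∃ W : FDRep ℂ H, CategoryTheory.Simple W ∧ χ = W.character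

/-- The standard vectors `f_{ij} = (δ_{1j} f_i, …, δ_{mj} f_i)` in `×^m V`. -/
def stdVec {V : Type*} [NormedAddCommGroup V] [InnerProductSpace ℂ V] {n : ℕ}
    (f : Fin n → V) (m : ℕ) (i : Fin n) (j : Fin m) : CartPow V m :=
  WithLp.toLp 2 (fun l => if l = j then f i else 0)

/-- `[χ, 1_{G_j}] = (1/|G_j|) Σ_{g ∈ G_j} χ(g)`. -/
def charInnerTriv {m : ℕ} (G : Subgroup (Equiv.Perm (Fin m))) (χ : ↥G → ℂ)
    (j : Fin m) : ℂ :=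
  (Nat.card (MulAction.stabilizer G j) : ℂ)⁻¹ * ∑ g : MulAction.stabilizer G j, χ (g : ↥G)

/-- `V^χ(G)` has an orthogonal basis consisting of standard χ-symmetrized vectors. -/
def HasOBasis (V : Type*) [NormedAddCommGroup V] [InnerProductSpace ℂ V] {n m : ℕ}
    (f : Fin n → V) (G : Subgroup (Equiv.Perm (Fin m))) (χ : ↥G → ℂ) : Prop :=
  ∃ (k : ℕ) (b : Module.Basis (Fin k) ℂ (LinearMap.range (cartSym V m G χ))),
    (∀ p q : Fin k, p ≠ q → ⟪(b p : CartPow V m), (b q : CartPow V m)⟫_ℂ = 0) ∧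
    ∀ p, ∃ (r : Fin n) (j : Fin m), (b p : CartPow V m) = cartSym V m G χ (stdVec f m r j)

/-- The Ramanujan sum `c_n(q)`. -/
def ramanujanSum (n q : ℕ) : ℂ :=
  ∑ s ∈ (Finset.range n).filter (fun s => Nat.gcd s n = 1),
    Complex.exp (2 * Real.pi * Complex.I * q * s / n)

end

/-- The dihedral group `D_{2m} ≤ S_m`, generated by the `m`-cycle `r` and the
reflection `s = (x ↦ -x)` fixing the first point. -/
def dihedralG (m : ℕ) [NeZero m] : Subgroup (Equiv.Perm (Fin m)) :=
  Subgroup.closure {finRotate m, (Equiv.neg (Fin m) : Equiv.Perm (Fin m))}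

/-- The reflection `s` as an element of `D_{2m}`. -/
def sElt (m : ℕ) [NeZero m] : ↥(dihedralG m) :=
  ⟨(Equiv.neg (Fin m) : Equiv.Perm (Fin m)), Subgroup.subset_closure (by simp)⟩

/-!
On `D_{2q}` the character `ψ_h` vanishes on the reflections, so the `l`-th coordinate of
`f^ψ_{ij}` is `(2/q) cos(2πh(l - j)/q) f_i`, and summing products of cosines gives
`⟪f^ψ_{rj}, f^ψ_{r'j'}⟫ = δ_{rr'} (2/q) cos(2πh(j - j')/q)`. For odd `q` these cosines never
vanish, so the vectors of an O-basis have pairwise distinct `r`: there are at most `n` of them.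
But `dim V^ψ(G) ≥ n + 1`, since the `f^ψ_{r0}` together with `f^ψ_{01} - cos(2πh/q) f^ψ_{00}`
are nonzero and pairwise orthogonal.
-/

open Equiv Real Finset

section Dihedral

open Fin.CommRing

variable {q : ℕ} [NeZero q]

lemma finRotate_pow_apply (k : ℕ) (x : Fin q) : (finRotate q ^ k) x = x + k := by
  induction k with
  | zero => simp
  | succ k ih => rw [pow_succ', Perm.mul_apply, ih, finRotate_apply]; push_cast; ring

variable (q) in
def signedTranslations : Subgroup (Perm (Fin q)) where
  carrier := {σ | ∃ c : Fin q, (∀ x, σ x = x + c) ∨ ∀ x, σ x = -x + c}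
  one_mem' := ⟨0, Or.inl fun x => by simp⟩
  mul_mem' := by
    rintro σ τ ⟨a, ha | ha⟩ ⟨b, hb | hb⟩
    · exact ⟨b + a, Or.inl fun x => by rw [Perm.mul_apply, hb, ha]; ring⟩
    · exact ⟨b + a, Or.inr fun x => by rw [Perm.mul_apply, hb, ha]; ring⟩
    · exact ⟨a - b, Or.inr fun x => by rw [Perm.mul_apply, hb, ha]; ring⟩
    · exact ⟨a - b, Or.inl fun x => by rw [Perm.mul_apply, hb, ha]; ring⟩
  inv_mem' := by
    rintro σ ⟨a, ha | ha⟩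
    · refine ⟨-a, Or.inl fun x => σ.injective ?_⟩
      rw [Perm.inv_def, apply_symm_apply, ha]; ring
    · refine ⟨a, Or.inr fun x => σ.injective ?_⟩
      rw [Perm.inv_def, apply_symm_apply, ha]; ring

lemma dihedralG_le_signedTranslations : dihedralG q ≤ signedTranslations q := by
  rw [dihedralG, Subgroup.closure_le]
  rintro σ (rfl | rfl)
  · exact ⟨1, Or.inl finRotate_apply⟩
  · exact ⟨0, Or.inr fun x => by simp⟩

variable (q) in
def dihedralRot (c : Fin q) : dihedralG q :=
  ⟨finRotate q ^ c.val, pow_mem (Subgroup.subset_closure (by simp)) _⟩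

lemma dihedralRot_apply (c x : Fin q) : (dihedralRot q c : Perm (Fin q)) x = x + c := by
  rw [dihedralRot, finRotate_pow_apply, Fin.cast_val_eq_self]

lemma sElt_mul_dihedralRot_apply (c x : Fin q) :
    ((sElt q * dihedralRot q c : dihedralG q) : Perm (Fin q)) x = -(x + c) := by
  rw [Subgroup.coe_mul, Perm.mul_apply, dihedralRot_apply]
  rfl

lemma dihedralEnum_bijective (hq : 2 < q) :
    Function.Bijective (Sum.elim (dihedralRot q) (fun c => sElt q * dihedralRot q c)) := by
  have h2 : (2 : Fin q) ≠ 0 := fun h2 => by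
    simpa [Nat.mod_eq_of_lt hq] using congrArg Fin.val h2
  refine ⟨?_, fun σ => ?_⟩
  -- compare the images of `0` and `1`; `r ^ a = s r ^ b` would force `2 = 0`
  · have key := fun σ τ (h : σ = τ) (x : Fin q) =>
      congrArg (fun g : dihedralG q => (g : Perm (Fin q)) x) h
    rintro (a | a) (b | b) h <;>
      have h0 := key _ _ h 0 <;> have h1 := key _ _ h 1 <;>
      simp only [Sum.elim_inl, Sum.elim_inr, dihedralRot_apply,
        sElt_mul_dihedralRot_apply, zero_add] at h0 h1
    · rw [h0]
    · exact absurd (by linear_combination h1 - h0) h2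
    · exact absurd (by linear_combination h0 - h1) h2
    · rw [neg_inj.1 h0]
  · obtain ⟨c, hc | hc⟩ := dihedralG_le_signedTranslations σ.2
    · exact ⟨Sum.inl c, Subtype.ext <| Perm.ext fun x => by simp [dihedralRot_apply, hc]⟩
    · refine ⟨Sum.inr (-c), Subtype.ext <| Perm.ext fun x => ?_⟩
      rw [Sum.elim_inr, sElt_mul_dihedralRot_apply, hc]; ring

noncomputable def dihedralEquiv (hq : 2 < q) : Fin q ⊕ Fin q ≃ dihedralG q :=
  Equiv.ofBijective _ (dihedralEnum_bijective hq)

lemma card_dihedralG (hq : 2 < q) : Nat.card (dihedralG q) = 2 * q := by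
  rw [← Nat.card_congr (dihedralEquiv hq), Nat.card_sum, Nat.card_eq_fintype_card,
    Fintype.card_fin]
  ring

lemma sum_dihedralG (hq : 2 < q) {M : Type*} [AddCommMonoid M] (F : dihedralG q → M) :
    ∑ σ, F σ = ∑ c, F (dihedralRot q c) + ∑ c, F (sElt q * dihedralRot q c) := by
  rw [← (dihedralEquiv hq).sum_comp, Fintype.sum_sum_type]
  rfl

end Dihedral

section Trigonometry

lemma sum_range_cos_eq_zero {θ β : ℝ} {q : ℕ} {k : ℤ} (hθ : sin θ ≠ 0)
    (hqθ : q * θ = k * π) : ∑ l ∈ range q, cos (2 * θ * l + β) = 0 := by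
  set F : ℕ → ℝ := fun l => sin (2 * θ * l - θ + β)
  have hstep (l : ℕ) : 2 * sin θ * cos (2 * θ * l + β) = F (l + 1) - F l := by
    simp only [F, sin_sub_sin]
    congr 3 <;> push_cast <;> ring
  have hper : F q = F 0 := by
    simp only [F, Nat.cast_zero, mul_zero, zero_sub]
    rw [← sin_add_int_mul_two_pi (-θ + β) k]
    congr 1
    linear_combination 2 * hqθ
  have htel : 2 * sin θ * ∑ l ∈ range q, cos (2 * θ * l + β) = 0 := by
    rw [mul_sum, sum_congr rfl fun l _ => hstep l, sum_range_sub, hper, sub_self]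
  exact (mul_eq_zero.1 htel).resolve_left (mul_ne_zero two_ne_zero hθ)

lemma sum_range_cos_mul_cos {θ : ℝ} {q : ℕ} {k : ℤ} (hθ : sin θ ≠ 0) (hqθ : q * θ = k * π)
    (a b : ℝ) :
    ∑ l ∈ range q, cos (θ * (l - a)) * cos (θ * (l - b)) = q / 2 * cos (θ * (a - b)) := by
  have hprod (l : ℕ) : cos (θ * (l - a)) * cos (θ * (l - b))
      = cos (θ * (a - b)) / 2 + cos (2 * θ * l + -θ * (a + b)) / 2 := by
    rw [show θ * (a - b) = θ * (l - b) - θ * (l - a) by ring,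
      show 2 * θ * l + -θ * (a + b) = θ * (l - b) + θ * (l - a) by ring, cos_sub, cos_add]
    ring
  rw [sum_congr rfl fun l _ => hprod l, sum_add_distrib, ← sum_div, ← sum_div,
    sum_range_cos_eq_zero hθ hqθ, sum_const, card_range, nsmul_eq_mul]
  ring

lemma sin_two_pi_mul_div_pos {q h : ℕ} (hh : 0 < h) (hhq : 2 * h < q) :
    0 < sin (2 * π * h / q) := by
  have hq : (0 : ℝ) < q := by exact_mod_cast (by omega : 0 < q)
  have hhq' : (2 * h : ℝ) < q := by exact_mod_cast hhq
  apply sin_pos_of_pos_of_lt_pi (by positivity)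
  rw [div_lt_iff₀ hq]
  nlinarith [pi_pos]

lemma cos_two_pi_mul_div_mul_ne_zero {q : ℕ} (h : ℕ) (hq : Odd q) (m : ℤ) :
    cos (2 * π * h / q * m) ≠ 0 := by
  rw [Ne, cos_eq_zero_iff]
  rintro ⟨k, hk⟩
  have hq0 : (q : ℝ) ≠ 0 := by exact_mod_cast hq.pos.ne'
  have hR : (4 * h * m : ℝ) = (2 * k + 1) * q := by
    field_simp at hk
    nlinarith [pi_pos]
  have hZ : 4 * h * m = (2 * k + 1) * (q : ℤ) := by exact_mod_cast hR
  have hodd : Odd ((2 * k + 1) * (q : ℤ)) := (odd_two_mul_add_one k).mul (by exact_mod_cast hq)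
  rw [← hZ] at hodd
  exact Int.not_even_iff_odd.2 hodd ⟨2 * h * m, by ring⟩

lemma cos_two_pi_mul_div_mul_val_sub {q : ℕ} (h : ℕ) (a b : Fin q) :
    cos (2 * π * h / q * (a - b).val) = cos (2 * π * h / q * (a.val - b.val)) := by
  rcases le_or_gt b a with hba | hab
  · rw [Fin.coe_sub_iff_le.2 hba, Nat.cast_sub hba]
  · have hq0 : (q : ℝ) ≠ 0 := by exact_mod_cast (Fin.pos a).ne'
    rw [Fin.coe_sub_iff_lt.2 hab, Nat.cast_sub (by omega),
      ← cos_add_nat_mul_two_pi (2 * π * h / q * (a.val - b.val)) h]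
    congr 1
    push_cast
    field_simp
    ring

end Trigonometry

section Symmetrizer

variable {V : Type*} [NormedAddCommGroup V] [InnerProductSpace ℂ V]

lemma cartSym_apply {m : ℕ} (G : Subgroup (Perm (Fin m))) (χ : G → ℂ) (u : CartPow V m)
    (l : Fin m) :
    cartSym V m G χ u l = (χ 1 / Nat.card G) • ∑ τ : G, χ τ • u ((τ : Perm (Fin m))⁻¹ l) := by
  simp only [cartSym, LinearMap.smul_apply, LinearMap.sum_apply, PiLp.smul_apply,
    WithLp.ofLp_sum, Finset.sum_apply]
  rfl

lemma inner_toLp_smul_toLp_smul {m : ℕ} (c d : Fin m → ℝ) (x y : V) :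
    ⟪(WithLp.toLp 2 fun l => (c l : ℂ) • x : CartPow V m),
      WithLp.toLp 2 fun l => (d l : ℂ) • y⟫_ℂ = (∑ l, c l * d l : ℝ) * ⟪x, y⟫_ℂ := by
  simp only [PiLp.inner_apply, inner_smul_left, inner_smul_right, Complex.conj_ofReal,
    Complex.ofReal_sum, Complex.ofReal_mul, sum_mul, mul_assoc, mul_left_comm]

end Symmetrizer

section DihedralCharacter

open Fin.CommRing

variable {q : ℕ} [NeZero q]

def IsDihedralChar (h : ℕ) (ψ : dihedralG q → ℂ) : Prop :=
  ∀ (g : dihedralG q) (k : ℕ),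
    ((g : Perm (Fin q)) = finRotate q ^ k → ψ g = ((2 * cos (2 * π * k * h / q) : ℝ) : ℂ)) ∧
    ((g : Perm (Fin q)) = (Equiv.neg (Fin q) : Perm (Fin q)) * finRotate q ^ k → ψ g = 0)

variable {h : ℕ} {ψ : dihedralG q → ℂ}

namespace IsDihedralChar

lemma apply_one (hψ : IsDihedralChar h ψ) : ψ 1 = 2 := by
  simpa using (hψ 1 0).1 (pow_zero _).symm

lemma apply_dihedralRot (hψ : IsDihedralChar h ψ) (c : Fin q) :
    ψ (dihedralRot q c) = ((2 * cos (2 * π * h / q * c.val) : ℝ) : ℂ) := by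
  rw [(hψ _ c.val).1 rfl]
  congr 3
  ring

lemma apply_sElt_mul_dihedralRot (hψ : IsDihedralChar h ψ) (c : Fin q) :
    ψ (sElt q * dihedralRot q c) = 0 :=
  (hψ _ c.val).2 rfl

end IsDihedralChar

variable {V : Type*} [NormedAddCommGroup V] [InnerProductSpace ℂ V] {n : ℕ}

lemma cartSym_stdVec (hψ : IsDihedralChar h ψ) (hq : 2 < q) (f : Fin n → V) (i : Fin n)
    (j : Fin q) :
    cartSym V q (dihedralG q) ψ (stdVec f q i j)
      = WithLp.toLp 2 fun l =>
          ((2 / q * cos (2 * π * h / q * (l.val - j.val)) : ℝ) : ℂ) • f i := by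
  ext l
  have hstd (c : Fin q) : stdVec f q i j ((dihedralRot q c : Perm (Fin q))⁻¹ l)
      = if c = l - j then f i else 0 := by
    simp only [stdVec, Perm.inv_eq_iff_eq, dihedralRot_apply]
    exact if_congr ⟨fun hc => by rw [hc]; ring, fun hc => by rw [hc]; ring⟩ rfl rfl
  rw [cartSym_apply, sum_dihedralG hq, hψ.apply_one, card_dihedralG hq]
  simp only [hψ.apply_sElt_mul_dihedralRot, zero_smul, sum_const_zero, add_zero, hstd,
    smul_ite, smul_zero, sum_ite_eq', mem_univ, if_true, hψ.apply_dihedralRot, smul_smul,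
    cos_two_pi_mul_div_mul_val_sub]
  congr 1
  push_cast
  field_simp

lemma inner_cartSym_stdVec (hψ : IsDihedralChar h ψ) (hh : 0 < h) (hhq : 2 * h < q)
    {f : Fin n → V} (hf : Orthonormal ℂ f) (r r' : Fin n) (j j' : Fin q) :
    ⟪cartSym V q (dihedralG q) ψ (stdVec f q r j),
        cartSym V q (dihedralG q) ψ (stdVec f q r' j')⟫_ℂ
      = if r = r' then ((2 / q * cos (2 * π * h / q * (j.val - j'.val)) : ℝ) : ℂ) else 0 := by
  have hq : (q : ℝ) ≠ 0 := by exact_mod_cast (by omega : q ≠ 0)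
  have hqθ : q * (2 * π * h / q) = ((2 * h : ℕ) : ℤ) * π := by
    push_cast
    field_simp
  have hsum := sum_range_cos_mul_cos (sin_two_pi_mul_div_pos hh hhq).ne' hqθ j.val j'.val
  rw [← Fin.sum_univ_eq_sum_range] at hsum
  rw [cartSym_stdVec hψ (by omega), cartSym_stdVec hψ (by omega), inner_toLp_smul_toLp_smul,
    orthonormal_iff_ite.1 hf]
  split_ifs
  · simp only [mul_mul_mul_comm (2 / (q : ℝ)), ← mul_sum, hsum]
    push_cast
    field_simp
  · rw [mul_zero]

lemma norm_sq_cartSym_stdVec (hψ : IsDihedralChar h ψ) (hh : 0 < h) (hhq : 2 * h < q)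
    {f : Fin n → V} (hf : Orthonormal ℂ f) (i : Fin n) (j : Fin q) :
    ‖cartSym V q (dihedralG q) ψ (stdVec f q i j)‖ ^ 2 = 2 / q := by
  rw [norm_sq_eq_re_inner (𝕜 := ℂ), inner_cartSym_stdVec hψ hh hhq hf]
  simp

lemma inner_cartSym_stdVec_ne_zero (hψ : IsDihedralChar h ψ) (hh : 0 < h) (hhq : 2 * h < q)
    (hqodd : Odd q) {f : Fin n → V} (hf : Orthonormal ℂ f) (r : Fin n) (j j' : Fin q) :
    ⟪cartSym V q (dihedralG q) ψ (stdVec f q r j),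
        cartSym V q (dihedralG q) ψ (stdVec f q r j')⟫_ℂ ≠ 0 := by
  have hcos : cos (2 * π * h / q * (j.val - j'.val)) ≠ 0 := by
    exact_mod_cast cos_two_pi_mul_div_mul_ne_zero h hqodd (j.val - j'.val)
  have hq : (0 : ℝ) < q := by exact_mod_cast hqodd.pos
  rw [inner_cartSym_stdVec hψ hh hhq hf, if_pos rfl, Complex.ofReal_ne_zero]
  exact mul_ne_zero (by positivity) hcos

lemma add_one_le_finrank_range_cartSym [FiniteDimensional ℂ V] [NeZero n]
    (hψ : IsDihedralChar h ψ) (hh : 0 < h) (hhq : 2 * h < q) {f : Fin n → V}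
    (hf : Orthonormal ℂ f) :
    n + 1 ≤ Module.finrank ℂ (LinearMap.range (cartSym V q (dihedralG q) ψ)) := by
  set C := cartSym V q (dihedralG q) ψ
  set F : Fin n → Fin q → CartPow V q := fun r j => C (stdVec f q r j)
  have hF (r r' : Fin n) (j j' : Fin q) : ⟪F r j, F r' j'⟫_ℂ
      = if r = r' then ((2 / q * cos (2 * π * h / q * (j.val - j'.val)) : ℝ) : ℂ) else 0 :=
    inner_cartSym_stdVec hψ hh hhq hf r r' j j'
  have hq : (0 : ℝ) < q := by exact_mod_cast (by omega : 0 < q)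
  set γ : ℝ := cos (2 * π * h / q) with hγ_def
  have hγ : 1 - γ ^ 2 ≠ 0 := by
    rw [← sin_sq]
    exact pow_ne_zero 2 (sin_two_pi_mul_div_pos hh hhq).ne'
  let j₁ : Fin q := ⟨1, by omega⟩
  let v : Fin n ⊕ Unit → CartPow V q :=
    Sum.elim (fun r => F r 0) fun _ => F 0 j₁ - (γ : ℂ) • F 0 0
  have hv_mem (p) : v p ∈ LinearMap.range C := by
    rcases p with r | _
    · exact LinearMap.mem_range_self C _
    · exact sub_mem (LinearMap.mem_range_self C _)
        (Submodule.smul_mem _ _ (LinearMap.mem_range_self C _))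
  have hval₀ : ((0 : Fin q).val : ℝ) = 0 := by simp
  have hval₁ : (j₁.val : ℝ) = 1 := by simp [j₁]
  have hne (p) : v p ≠ 0 := by
    rw [← inner_self_ne_zero (𝕜 := ℂ)]
    rcases p with r | _
    · simp only [v, Sum.elim_inl, hF, if_true, sub_self, mul_zero, cos_zero, mul_one]
      exact Complex.ofReal_ne_zero.2 (by positivity)
    · simp only [v, Sum.elim_inr, inner_sub_left, inner_sub_right, inner_smul_left,
        inner_smul_right, hF, if_true, hval₀, hval₁, sub_self, zero_sub, mul_zero, mul_neg,
        sub_zero, mul_one, cos_zero, cos_neg, Complex.conj_ofReal, ← hγ_def]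
      convert Complex.ofReal_ne_zero.2 (mul_ne_zero (by positivity : 2 / (q : ℝ) ≠ 0) hγ)
        using 1
      push_cast
      ring
  have hperp (r : Fin n) : ⟪v (.inl r), v (.inr ())⟫_ℂ = 0 := by
    simp only [v, Sum.elim_inl, Sum.elim_inr, inner_sub_right, inner_smul_right, hF, hval₀,
      hval₁, sub_self, zero_sub, mul_neg, mul_one, mul_zero, cos_neg, cos_zero, ← hγ_def]
    split_ifs <;> push_cast <;> ring
  have horth : Pairwise fun p p' => ⟪v p, v p'⟫_ℂ = 0 := by
    rintro (r | _) (r' | _) hpp'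
    · simp only [v, Sum.elim_inl, hF]
      exact if_neg fun hr => hpp' (congrArg Sum.inl hr)
    · exact hperp r
    · exact inner_eq_zero_symm.1 (hperp r')
    · exact absurd rfl hpp'
  let v' : Fin n ⊕ Unit → LinearMap.range C := fun p => ⟨v p, hv_mem p⟩
  simpa using (LinearIndependent.of_comp (LinearMap.range C).subtype (v := v')
    (linearIndependent_of_ne_zero_of_inner_eq_zero hne horth)).fintype_card_le_finrank

end DihedralCharacter

/-- for a prime `q > 3`, `G = D_{2q} ≤ S_q` and `ψ = ψ_h`
(`0 < h < q/2`), one has `‖f^ψ_{i1}‖² = 2/q < 1/2`, yet `V^ψ(G)` has no `O`-basis: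
the norm condition of the non-existence criterion is sufficient but not necessary. -/
theorem dihedral_prime_no_OBasis
    (V : Type*) [NormedAddCommGroup V] [InnerProductSpace ℂ V] [FiniteDimensional ℂ V]
    {n : ℕ} (q : ℕ) [NeZero q] (hq : q.Prime) (hq3 : 3 < q)
    (f : OrthonormalBasis (Fin n) ℂ V) (hn : 2 ≤ n)
    (h : ℕ) (hh1 : 0 < h) (hh2 : 2 * h < q)
    (ψ : ↥(dihedralG q) → ℂ)
    (hψ : ∀ (g : ↥(dihedralG q)) (k : ℕ),
      ((g : Equiv.Perm (Fin q)) = (finRotate q) ^ k →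
        ψ g = ((2 * Real.cos (2 * Real.pi * k * h / q) : ℝ) : ℂ)) ∧
      ((g : Equiv.Perm (Fin q)) =
          (Equiv.neg (Fin q) : Equiv.Perm (Fin q)) * (finRotate q) ^ k → ψ g = 0)) :
    (∀ i : Fin n, ‖cartSym V q (dihedralG q) ψ (stdVec ⇑f q i 0)‖ ^ 2 = 2 / (q : ℝ)) ∧
    2 / (q : ℝ) < 1 / 2 ∧
    ¬ HasOBasis V ⇑f (dihedralG q) ψ := by
  refine ⟨fun i => norm_sq_cartSym_stdVec hψ hh1 hh2 f.orthonormal i 0, ?_, ?_⟩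
  · have hq5 : (5 : ℝ) ≤ q := by
      have : q ≠ 4 := by rintro rfl; norm_num at hq
      exact_mod_cast (by omega : 5 ≤ q)
    rw [div_lt_div_iff₀ (by linarith) (by norm_num)]
    linarith
  rintro ⟨k, b, horth, hstd⟩
  choose r j hb using hstd
  have hr : Function.Injective r := fun p p' hpp' => by
    by_contra hne
    have := horth p p' hne
    rw [hb, hb, ← hpp'] at this
    exact inner_cartSym_stdVec_ne_zero hψ hh1 hh2 (hq.odd_of_ne_two (by omega)) f.orthonormal
      (r p) (j p) (j p') this
  have hkn : k ≤ n := by simpa using Fintype.card_le_of_injective r hr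
  have : NeZero n := ⟨by omega⟩
  have hnk : n + 1 ≤ k := by
    simpa [Module.finrank_eq_card_basis b] using
      add_one_le_finrank_range_cartSym hψ hh1 hh2 f.orthonormal
  omega
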